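/- arXiv:0710.3834 — 2 statements merged into one kernel-verified Lean document; each statement's English description precedes it below -/
import Mathlib

section
/- There exists a constant C > 0 (depending only on the dimension n and the indices j,k) such that for all t ∈ (0,1] and all ξ ∈ ℝⁿ, |𝓕(y ↦ y_j y_k e^{-2|y|²/t²} e^{|y|²})(ξ)| ≤ C tⁿ e^{-t²|ξ|²/16}. -/
open MeasureTheory Complex Real
open scoped RealInnerProductSpace ENNReal

noncomputable section

abbrev E (n : ℕ) := EuclideanSpace ℝ (Fin n)

/-!
With `a = 2 / t² - 1 ≥ 1` the integrand is `y_j y_k e^{-a|y|²} e^{-i⟪y, ξ⟫}`, which factors over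
the coordinates. Each factor is the Fourier transform of `x^m e^{-a x²}` with `m ≤ 2`; since
multiplying by `x` corresponds to `i d/dr`, it is a polynomial of degree `m` in `r` times the
Gaussian `√(π/a) e^{-r²/(4a)}`, hence at most `(1 + r²/a)^m` times it. The polynomial factor is
absorbed by half of the Gaussian decay, and `√(π/a) ≤ √π t` because `a t² = 2 - t² ≥ 1`.
-/

def gaussianFourier (a r : ℝ) : ℝ := √(π / a) * Real.exp (-r ^ 2 / (4 * a))

lemma gaussianFourier_nonneg (a r : ℝ) : 0 ≤ gaussianFourier a r := by
  unfold gaussianFourier; positivity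

def fourierGaussianMoment (a : ℝ) (m : ℕ) (r : ℝ) : ℂ :=
  ∫ x : ℝ, (x : ℂ) ^ m * cexp ((-a * x ^ 2 : ℝ) : ℂ) * cexp (-I * ((r * x : ℝ) : ℂ))

lemma integrable_pow_mul_exp_neg_mul_sq {b : ℝ} (hb : 0 < b) (m : ℕ) :
    Integrable fun x : ℝ ↦ x ^ m * Real.exp (-b * x ^ 2) := by
  simpa using integrable_rpow_mul_exp_neg_mul_sq hb (s := m) (by linarith [m.cast_nonneg (α := ℝ)])

lemma norm_pow_mul_cexp_mul_cexp (a : ℝ) (m : ℕ) (r x : ℝ) :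
    ‖(x : ℂ) ^ m * cexp ((-a * x ^ 2 : ℝ) : ℂ) * cexp (-I * ((r * x : ℝ) : ℂ))‖
      = ‖x ^ m * Real.exp (-a * x ^ 2)‖ := by
  rw [show -I * ((r * x : ℝ) : ℂ) = ((-(r * x) : ℝ) : ℂ) * I by push_cast; ring, norm_mul,
    norm_mul, norm_exp_ofReal_mul_I, mul_one, norm_exp_ofReal, norm_mul, norm_pow, norm_real,
    Real.norm_of_nonneg (Real.exp_pos _).le, norm_pow]

lemma hasDerivAt_fourierGaussianMoment {a : ℝ} (ha : 0 < a) (m : ℕ) (r : ℝ) :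
    HasDerivAt (fourierGaussianMoment a m) (-I * fourierGaussianMoment a (m + 1) r) r := by
  have hF (r : ℝ) : Integrable fun x : ℝ ↦
      (x : ℂ) ^ m * cexp ((-a * x ^ 2 : ℝ) : ℂ) * cexp (-I * ((r * x : ℝ) : ℂ)) := by
    refine (integrable_pow_mul_exp_neg_mul_sq ha m).norm.mono' (by fun_prop) ?_
    exact .of_forall fun x ↦ (norm_pow_mul_cexp_mul_cexp a m r x).le
  have hderiv (x r : ℝ) : HasDerivAt
      (fun r : ℝ ↦ (x : ℂ) ^ m * cexp ((-a * x ^ 2 : ℝ) : ℂ) * cexp (-I * ((r * x : ℝ) : ℂ)))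
      (-I * ((x : ℂ) ^ (m + 1) * cexp ((-a * x ^ 2 : ℝ) : ℂ) * cexp (-I * ((r * x : ℝ) : ℂ))))
      r := by
    refine (((((hasDerivAt_id r).mul_const x).ofReal_comp).const_mul (-I)).cexp.const_mul
      ((x : ℂ) ^ m * cexp ((-a * x ^ 2 : ℝ) : ℂ))).congr_deriv ?_
    push_cast [id]
    ring
  -- The phase has modulus one, so `|x|^(m+1) e^{-a x²}` dominates the derivative for every `r`.
  have := hasDerivAt_integral_of_dominated_loc_of_deriv_le (𝕜 := ℝ) (μ := volume) (x₀ := r)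
    (bound := fun x ↦ ‖x ^ (m + 1) * Real.exp (-a * x ^ 2)‖) Filter.univ_mem
    (.of_forall fun r ↦ (hF r).aestronglyMeasurable) (hF r) (by fun_prop)
    (.of_forall fun x r _ ↦ by rw [norm_mul, norm_neg, norm_I, one_mul, norm_pow_mul_cexp_mul_cexp])
    (integrable_pow_mul_exp_neg_mul_sq ha (m + 1)).norm (.of_forall fun x r _ ↦ hderiv x r)
  rw [fourierGaussianMoment, ← integral_const_mul]
  exact this.2

lemma fourierGaussianMoment_zero {a : ℝ} (ha : 0 < a) (r : ℝ) :
    fourierGaussianMoment a 0 r = (gaussianFourier a r : ℂ) := by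
  have h := fourierIntegral_gaussian (b := a) (by simpa using ha) (-r)
  rw [show (π : ℂ) / a = ((π / a : ℝ) : ℂ) by push_cast; rfl, ← ofReal_ofNat, ← ofReal_one,
    ← ofReal_div, ← ofReal_cpow (by positivity), ← Real.sqrt_eq_rpow] at h
  rw [fourierGaussianMoment, gaussianFourier, ofReal_mul, ofReal_exp]
  convert h using 1
  · congr 1 with x
    push_cast
    ring_nf
  · push_cast
    ring_nf

lemma hasDerivAt_gaussianFourier (a r : ℝ) :
    HasDerivAt (gaussianFourier a) (-(r / (2 * a)) * gaussianFourier a r) r := by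
  have h : HasDerivAt (fun r : ℝ ↦ -r ^ 2 / (4 * a)) (-(2 * r) / (4 * a)) r := by
    simpa using (hasDerivAt_pow 2 r).neg.div_const (4 * a)
  refine (h.exp.const_mul _).congr_deriv ?_
  rw [gaussianFourier]
  ring

lemma fourierGaussianMoment_one {a : ℝ} (ha : 0 < a) (r : ℝ) :
    fourierGaussianMoment a 1 r = -I * ((r / (2 * a) * gaussianFourier a r : ℝ) : ℂ) := by
  have h0 : fourierGaussianMoment a 0 = fun r ↦ (gaussianFourier a r : ℂ) :=
    funext (fourierGaussianMoment_zero ha)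
  have h := hasDerivAt_fourierGaussianMoment ha 0 r
  rw [h0] at h
  have := h.unique (hasDerivAt_gaussianFourier a r).ofReal_comp
  push_cast at this ⊢
  linear_combination I * this + fourierGaussianMoment a 1 r * I_sq

lemma fourierGaussianMoment_two {a : ℝ} (ha : 0 < a) (r : ℝ) :
    fourierGaussianMoment a 2 r
      = (((1 / (2 * a) - r ^ 2 / (4 * a ^ 2)) * gaussianFourier a r : ℝ) : ℂ) := by
  have h1 : fourierGaussianMoment a 1
      = fun r ↦ -I * ((r / (2 * a) * gaussianFourier a r : ℝ) : ℂ) :=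
    funext (fourierGaussianMoment_one ha)
  have h := hasDerivAt_fourierGaussianMoment ha 1 r
  rw [h1] at h
  have hd := ((((hasDerivAt_id r).div_const (2 * a)).mul
    (hasDerivAt_gaussianFourier a r)).ofReal_comp).const_mul (-I)
  rw [mul_left_cancel₀ (neg_ne_zero.2 I_ne_zero) (h.unique hd)]
  congr 1
  simp only [id]
  ring

lemma norm_fourierGaussianMoment_le {a : ℝ} (ha : 1 ≤ a) {m : ℕ} (hm : m ≤ 2) (r : ℝ) :
    ‖fourierGaussianMoment a m r‖ ≤ (1 + r ^ 2 / a) ^ m * gaussianFourier a r := by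
  have ha0 : 0 < a := by linarith
  have hg := gaussianFourier_nonneg a r
  interval_cases m
  · rw [fourierGaussianMoment_zero ha0, pow_zero, one_mul, norm_real, Real.norm_of_nonneg hg]
  · rw [fourierGaussianMoment_one ha0, norm_mul, norm_neg, norm_I, one_mul, norm_real,
      Real.norm_eq_abs, abs_mul, abs_of_nonneg hg, pow_one, abs_div,
      abs_of_pos (by positivity : 0 < 2 * a)]
    gcongr
    calc |r| / (2 * a) ≤ (2 * a + 2 * r ^ 2) / (2 * a) := by
          gcongr; nlinarith [sq_nonneg (|r| - 1), sq_abs r]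
      _ = 1 + r ^ 2 / a := by field_simp
  · rw [fourierGaussianMoment_two ha0, norm_real, Real.norm_eq_abs, abs_mul, abs_of_nonneg hg]
    gcongr
    have h1 : 1 / (2 * a) ≤ 1 := by rw [div_le_one (by positivity)]; linarith
    have h2 : r ^ 2 / (4 * a ^ 2) ≤ r ^ 2 / a := by
      apply div_le_div_of_nonneg_left (sq_nonneg r) ha0; nlinarith
    rw [abs_le]
    constructor <;> nlinarith [div_nonneg zero_le_one (by positivity : (0 : ℝ) ≤ 2 * a),
      div_nonneg (sq_nonneg r) (by positivity : (0 : ℝ) ≤ 4 * a ^ 2)]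

lemma prod_pow_ite_add_ite {ι M : Type*} [Fintype ι] [DecidableEq ι] [CommMonoid M] (j k : ι)
    (f : ι → M) :
    ∏ i, f i ^ ((if i = j then 1 else 0) + (if i = k then 1 else 0)) = f j * f k := by
  simp only [pow_add, Finset.prod_mul_distrib]
  congr 1 <;> simp [pow_ite]

lemma integral_euclideanSpace_prod {ι : Type*} [Fintype ι] (f : ι → ℝ → ℂ) :
    ∫ y : EuclideanSpace ℝ ι, ∏ i, f i (y i) = ∏ i, ∫ x, f i x := by
  rw [← (PiLp.volume_preserving_toLp ι).integral_comp
    (MeasurableEquiv.toLp 2 _).measurableEmbedding]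
  exact integral_fintype_prod_eq_prod f

section EuclideanSpace

variable {ι : Type*} [Fintype ι]

lemma sq_apply_le_norm_sq (ξ : EuclideanSpace ℝ ι) (i : ι) : ξ i ^ 2 ≤ ‖ξ‖ ^ 2 := by
  rw [EuclideanSpace.norm_sq_eq]
  simpa using Finset.single_le_sum (f := fun i ↦ ‖ξ i‖ ^ 2) (fun _ _ ↦ sq_nonneg _)
    (Finset.mem_univ i)

lemma prod_gaussianFourier (a : ℝ) (ξ : EuclideanSpace ℝ ι) :
    ∏ i, gaussianFourier a (ξ i) = √(π / a) ^ Fintype.card ι * Real.exp (-‖ξ‖ ^ 2 / (4 * a)) := by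
  simp only [gaussianFourier]
  rw [Finset.prod_mul_distrib, Finset.prod_const, ← Real.exp_sum, ← Finset.sum_div,
    Finset.sum_neg_distrib, EuclideanSpace.norm_sq_eq]
  simp

variable [DecidableEq ι]

lemma mul_mul_cexp_mul_cexp_eq_prod (j k : ι) (a : ℝ) (ξ y : EuclideanSpace ℝ ι) :
    (y j : ℂ) * (y k : ℂ) * cexp ((-a * ‖y‖ ^ 2 : ℝ) : ℂ) * cexp (-I * (⟪y, ξ⟫ : ℂ))
      = ∏ i, ((y i : ℂ) ^ ((if i = j then 1 else 0) + (if i = k then 1 else 0)) *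
          cexp ((-a * y i ^ 2 : ℝ) : ℂ) * cexp (-I * ((ξ i * y i : ℝ) : ℂ))) := by
  rw [Finset.prod_mul_distrib, Finset.prod_mul_distrib, prod_pow_ite_add_ite, ← Complex.exp_sum,
    ← Complex.exp_sum, EuclideanSpace.norm_sq_eq, PiLp.inner_apply]
  simp only [Real.norm_eq_abs, sq_abs]
  push_cast
  simp [Finset.mul_sum]

lemma integral_mul_mul_cexp_mul_cexp_eq_prod (j k : ι) (a : ℝ) (ξ : EuclideanSpace ℝ ι) :
    ∫ y : EuclideanSpace ℝ ι,
        (y j : ℂ) * (y k : ℂ) * cexp ((-a * ‖y‖ ^ 2 : ℝ) : ℂ) * cexp (-I * (⟪y, ξ⟫ : ℂ))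
      = ∏ i, fourierGaussianMoment a ((if i = j then 1 else 0) + (if i = k then 1 else 0))
          (ξ i) := by
  simp_rw [mul_mul_cexp_mul_cexp_eq_prod j k a ξ]
  exact integral_euclideanSpace_prod fun i x ↦
    (x : ℂ) ^ ((if i = j then 1 else 0) + (if i = k then 1 else 0)) *
      cexp ((-a * x ^ 2 : ℝ) : ℂ) * cexp (-I * ((ξ i * x : ℝ) : ℂ))

lemma norm_integral_mul_mul_cexp_mul_cexp_le (j k : ι) {a : ℝ} (ha : 1 ≤ a)
    (ξ : EuclideanSpace ℝ ι) :
    ‖∫ y : EuclideanSpace ℝ ι,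
        (y j : ℂ) * (y k : ℂ) * cexp ((-a * ‖y‖ ^ 2 : ℝ) : ℂ) * cexp (-I * (⟪y, ξ⟫ : ℂ))‖
      ≤ (1 + ‖ξ‖ ^ 2 / a) ^ 2 * (√(π / a) ^ Fintype.card ι * Real.exp (-‖ξ‖ ^ 2 / (4 * a))) := by
  rw [integral_mul_mul_cexp_mul_cexp_eq_prod, norm_prod]
  calc ∏ i, ‖fourierGaussianMoment a ((if i = j then 1 else 0) + (if i = k then 1 else 0)) (ξ i)‖
      ≤ ∏ i, ((1 + ξ i ^ 2 / a) ^ ((if i = j then 1 else 0) + (if i = k then 1 else 0)) *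
          gaussianFourier a (ξ i)) :=
        Finset.prod_le_prod (fun _ _ ↦ norm_nonneg _) fun i _ ↦
          norm_fourierGaussianMoment_le ha (by split_ifs <;> norm_num) _
    _ ≤ ∏ i, ((1 + ‖ξ‖ ^ 2 / a) ^ ((if i = j then 1 else 0) + (if i = k then 1 else 0)) *
          gaussianFourier a (ξ i)) := by
        refine Finset.prod_le_prod (fun i _ ↦ by have := gaussianFourier_nonneg a (ξ i); positivity)
          fun i _ ↦ mul_le_mul_of_nonneg_right ?_ (gaussianFourier_nonneg a _)
        gcongr (1 + ?_ / a) ^ _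
        exact sq_apply_le_norm_sq ξ i
    _ = (1 + ‖ξ‖ ^ 2 / a) ^ 2 * (√(π / a) ^ Fintype.card ι * Real.exp (-‖ξ‖ ^ 2 / (4 * a))) := by
        rw [Finset.prod_mul_distrib, prod_pow_ite_add_ite, prod_gaussianFourier, ← sq]

end EuclideanSpace

lemma one_add_sq_mul_exp_neg_le {u : ℝ} (hu : 0 ≤ u) :
    (1 + u) ^ 2 * Real.exp (-u / 4) ≤ 256 * Real.exp (-u / 8) := by
  have h : 1 + u ≤ 16 * Real.exp (u / 16) := by linarith [Real.add_one_le_exp (u / 16)]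
  calc (1 + u) ^ 2 * Real.exp (-u / 4) ≤ (16 * Real.exp (u / 16)) ^ 2 * Real.exp (-u / 4) := by
        gcongr
    _ = 256 * Real.exp (-u / 8) := by
        rw [mul_pow, ← Real.exp_nat_mul, mul_assoc, ← Real.exp_add]
        norm_num
        ring_nf

lemma sqrt_pi_div_le {a t : ℝ} (ht : 0 < t) (hat : 1 ≤ a * t ^ 2) : √(π / a) ≤ √π * t := by
  have ha : 0 < a := by nlinarith [pow_pos ht 2]
  rw [← Real.sqrt_sq ht.le, ← Real.sqrt_mul Real.pi_pos.le]
  exact Real.sqrt_le_sqrt (by rw [div_le_iff₀ ha]; nlinarith [Real.pi_pos])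

lemma one_add_div_sq_mul_exp_neg_le {a t N : ℝ} (ha : 0 < a) (hat : a * t ^ 2 ≤ 2) (hN : 0 ≤ N) :
    (1 + N / a) ^ 2 * Real.exp (-N / (4 * a)) ≤ 256 * Real.exp (-(t ^ 2 * N) / 16) := by
  have h := one_add_sq_mul_exp_neg_le (div_nonneg hN ha.le)
  rw [show -(N / a) / 4 = -N / (4 * a) by ring] at h
  refine h.trans (mul_le_mul_of_nonneg_left (Real.exp_le_exp.2 ?_) (by norm_num))
  rw [neg_div, neg_div, neg_le_neg_iff, div_div, div_le_div_iff₀ (by norm_num) (by positivity)]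
  nlinarith

/-- uniform Gaussian bound for the Fourier transform of
`y ↦ y_j y_k e^{-2|y|²/t²} e^{|y|²}`, `t ∈ (0,1]`. -/
theorem stmt_1 (n : ℕ) (j k : Fin n) :
    ∃ C > 0, ∀ t ∈ Set.Ioc (0:ℝ) 1, ∀ ξ : E n,
      ‖∫ y : E n,
          (Complex.ofReal (y j) * Complex.ofReal (y k)) *
            Complex.exp (Complex.ofReal (-2 * ‖y‖ ^ 2 / t ^ 2 + ‖y‖ ^ 2)) *
            Complex.exp (-Complex.I * Complex.ofReal ⟪y, ξ⟫)‖
        ≤ C * t ^ n * Real.exp (-(t ^ 2 * ‖ξ‖ ^ 2) / 16) := by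
  refine ⟨256 * √π ^ n, by positivity, fun t ⟨ht0, ht1⟩ ξ ↦ ?_⟩
  obtain ⟨a, ha_def⟩ : ∃ a : ℝ, a = 2 / t ^ 2 - 1 := ⟨_, rfl⟩
  have hat : a * t ^ 2 = 2 - t ^ 2 := by rw [ha_def]; field_simp
  have ht2 : t ^ 2 ≤ 1 := pow_le_one₀ ht0.le ht1
  have ha : 1 ≤ a := by nlinarith [pow_pos ht0 2]
  have hexp (y : E n) : -2 * ‖y‖ ^ 2 / t ^ 2 + ‖y‖ ^ 2 = -a * ‖y‖ ^ 2 := by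
    rw [ha_def]
    field_simp
    ring
  simp_rw [hexp]
  refine (norm_integral_mul_mul_cexp_mul_cexp_le j k ha ξ).trans ?_
  rw [Fintype.card_fin]
  calc (1 + ‖ξ‖ ^ 2 / a) ^ 2 * (√(π / a) ^ n * Real.exp (-‖ξ‖ ^ 2 / (4 * a)))
      = √(π / a) ^ n * ((1 + ‖ξ‖ ^ 2 / a) ^ 2 * Real.exp (-‖ξ‖ ^ 2 / (4 * a))) := by ring
    _ ≤ (√π * t) ^ n * (256 * Real.exp (-(t ^ 2 * ‖ξ‖ ^ 2) / 16)) := by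
        gcongr ?_ ^ n * ?_
        · exact sqrt_pi_div_le ht0 (by linarith)
        · exact one_add_div_sq_mul_exp_neg_le (by linarith) (by nlinarith) (by positivity)
    _ = 256 * √π ^ n * t ^ n * Real.exp (-(t ^ 2 * ‖ξ‖ ^ 2) / 16) := by ring
end
end

section
/- Let v : ℝⁿ → (0,∞) be measurable, submultiplicative, and satisfy v(tξ) ≤ C v(ξ) for all t ∈ [0,1], ξ ∈ ℝⁿ, with C independent of t and ξ. Let H ∈ L¹_{(v)}(ℝⁿ) be nonnegative and define ĝ(ξ) = ∫₀¹ ∫ (1-t) H(η) e^{-|ξ - tη|²/16} dη dt. Then ĝ ∈ L¹_{(v)}(ℝⁿ) and ∫ ĝ(ξ) v(ξ) dξ ≤ C' ∫ H(η) v(η) dη, where C' depends only on C, n and ∫ e^{-|ξ|²/16} v(ξ)dξ. -/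
open MeasureTheory Complex Real
open scoped RealInnerProductSpace ENNReal

noncomputable section

/-
After Tonelli, the `ξ`-integral for fixed `t` and `η` is the integral of a translate of the
kernel against `v`; submultiplicativity bounds it by `v(tη) ∫ e^{-|ξ|²/16} v(ξ) dξ`, and
`v(tη) ≤ C v(η)`. Integrating against `H(η) dη` and `(1 - t) dt ≤ dt` over `(0, 1)` gives the
bound. The estimate is carried out for lower Lebesgue integrals, where Tonelli needs no
integrability, and integrability of `ĝ v` is read off from its finiteness.
-/

open Set

theorem lintegral_comp_sub_mul_le_of_submultiplicative {G : Type*} [AddGroup G]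
    [MeasurableSpace G] [MeasurableAdd G] {μ : Measure G} [μ.IsAddRightInvariant]
    {k w : G → ℝ≥0∞} (hkw : AEMeasurable (fun x => k x * w x) μ)
    (hw : ∀ x a, w (x + a) ≤ w x * w a) (a : G) :
    ∫⁻ x, k (x - a) * w x ∂μ ≤ w a * ∫⁻ x, k x * w x ∂μ := by
  calc ∫⁻ x, k (x - a) * w x ∂μ = ∫⁻ x, k x * w (x + a) ∂μ := by
        rw [← lintegral_add_right_eq_self _ a]
        simp only [add_sub_cancel_right]
    _ ≤ ∫⁻ x, w a * (k x * w x) ∂μ :=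
        lintegral_mono fun x => by grw [hw x a]; exact le_of_eq (by ring)
    _ = w a * ∫⁻ x, k x * w x ∂μ := lintegral_const_mul'' _ hkw

theorem integrable_and_integral_le_of_lintegral_ofReal_le {α : Type*} [MeasurableSpace α]
    {μ : Measure α} {f : α → ℝ} {B : ℝ} (hf : 0 ≤ f) (hfm : AEStronglyMeasurable f μ)
    (hB : 0 ≤ B) (h : ∫⁻ x, ENNReal.ofReal (f x) ∂μ ≤ ENNReal.ofReal B) :
    Integrable f μ ∧ ∫ x, f x ∂μ ≤ B := by
  refine ⟨⟨hfm, (hasFiniteIntegral_iff_ofReal (ae_of_all _ hf)).2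
    (h.trans_lt ENNReal.ofReal_lt_top)⟩, ?_⟩
  rw [integral_eq_lintegral_of_nonneg_ae (ae_of_all _ hf) hfm]
  exact ENNReal.toReal_le_of_le_ofReal hB h

section Majorant

variable {V : Type*} [NormedAddCommGroup V] [NormedSpace ℝ V] [MeasurableSpace V]
  {μ : Measure V} {H φ : V → ℝ}

/-- The paper's `ĝ`, with a general kernel `φ` in place of the Gaussian `e^{-|·|²/16}`. -/
def majorant (μ : Measure V) (H φ : V → ℝ) (ξ : V) : ℝ :=
  ∫ t in Ioo (0 : ℝ) 1, ∫ η, (1 - t) * H η * φ (ξ - t • η) ∂μ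

theorem majorant_nonneg (hH : 0 ≤ H) (hφ : 0 ≤ φ) (ξ : V) : 0 ≤ majorant μ H φ ξ :=
  setIntegral_nonneg measurableSet_Ioo fun t ht => integral_nonneg fun η =>
    mul_nonneg (mul_nonneg (by linarith [ht.2]) (hH η)) (hφ _)

theorem ofReal_majorant_le (hH : 0 ≤ H) (hφ : 0 ≤ φ) (ξ : V) :
    ENNReal.ofReal (majorant μ H φ ξ)
      ≤ ∫⁻ t in Ioo (0 : ℝ) 1, ∫⁻ η, ENNReal.ofReal (H η) * ENNReal.ofReal (φ (ξ - t • η)) ∂μ := by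
  refine (ofReal_le_enorm _).trans <| (enorm_integral_le_lintegral_enorm _).trans <|
    setLIntegral_mono' measurableSet_Ioo fun t ht => (enorm_integral_le_lintegral_enorm _).trans <|
    lintegral_mono fun η => ?_
  have h1t : 1 - t ≤ 1 := by linarith [ht.1]
  rw [enorm_eq_ofReal (mul_nonneg (mul_nonneg (by linarith [ht.2]) (hH η)) (hφ _)),
    ← ENNReal.ofReal_mul (hH η)]
  exact ENNReal.ofReal_le_ofReal
    (mul_le_mul_of_nonneg_right (mul_le_of_le_one_left (hH η) h1t) (hφ _))

variable [BorelSpace V] [SecondCountableTopology V] [SFinite μ]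

theorem stronglyMeasurable_majorant (hH : Measurable H) (hφ : Measurable φ) :
    StronglyMeasurable (majorant μ H φ) := by
  have hF : StronglyMeasurable
      fun q : (V × ℝ) × V => (1 - q.1.2) * H q.2 * φ (q.1.1 - q.1.2 • q.2) :=
    (by fun_prop : Measurable _).stronglyMeasurable
  exact hF.integral_prod_right'.integral_prod_right' (ν := volume.restrict (Ioo (0 : ℝ) 1))

variable [μ.IsAddRightInvariant]

theorem lintegral_lintegral_comp_sub_smul_mul_le {ν : Measure ℝ} [SFinite ν]
    {k h w : V → ℝ≥0∞} (hk : Measurable k) (hh : Measurable h) (hw : Measurable w)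
    (hw_sub : ∀ x a, w (x + a) ≤ w x * w a) {c : ℝ≥0∞}
    (hw_smul : ∀ᵐ t ∂ν, ∀ η, w (t • η) ≤ c * w η) :
    ∫⁻ ξ, (∫⁻ t, ∫⁻ η, h η * k (ξ - t • η) ∂μ ∂ν) * w ξ ∂μ
      ≤ ν univ * c * (∫⁻ x, k x * w x ∂μ) * ∫⁻ η, h η * w η ∂μ := by
  have hinner : ∀ ξ, Measurable fun t : ℝ => ∫⁻ η, h η * k (ξ - t • η) ∂μ := fun ξ =>
    Measurable.lintegral_prod_right (f := fun t η => h η * k (ξ - t • η)) (by fun_prop)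
  set I := ∫⁻ x, k x * w x ∂μ
  calc ∫⁻ ξ, (∫⁻ t, ∫⁻ η, h η * k (ξ - t • η) ∂μ ∂ν) * w ξ ∂μ
      = ∫⁻ ξ, ∫⁻ t, ∫⁻ η, h η * k (ξ - t • η) * w ξ ∂μ ∂ν ∂μ := by
        refine lintegral_congr fun ξ => ?_
        rw [← lintegral_mul_const _ (hinner ξ)]
        refine lintegral_congr fun t => ?_
        rw [← lintegral_mul_const _ (by fun_prop)]
    _ = ∫⁻ t, ∫⁻ η, h η * ∫⁻ ξ, k (ξ - t • η) * w ξ ∂μ ∂μ ∂ν := by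
        rw [lintegral_lintegral_swap (by fun_prop)]
        refine lintegral_congr fun t => ?_
        rw [lintegral_lintegral_swap (by fun_prop)]
        refine lintegral_congr fun η => ?_
        simp_rw [mul_assoc]
        exact lintegral_const_mul _ (by fun_prop)
    _ ≤ ∫⁻ _t, ∫⁻ η, h η * (c * w η * I) ∂μ ∂ν := by
        refine lintegral_mono_ae ?_
        filter_upwards [hw_smul] with t ht
        refine lintegral_mono fun η => ?_
        grw [lintegral_comp_sub_mul_le_of_submultiplicative (hk.mul hw).aemeasurable hw_sub, ht η]
    _ = ν univ * c * I * ∫⁻ η, h η * w η ∂μ := by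
        have : ∀ η, h η * (c * w η * I) = h η * w η * (c * I) := fun η => by ring
        simp_rw [this]
        rw [lintegral_mul_const _ (by fun_prop), lintegral_const]
        ring

theorem lintegral_ofReal_majorant_mul_le {v : V → ℝ} {C : ℝ} (hH : 0 ≤ H) (hφ : 0 ≤ φ) (hv : 0 ≤ v)
    (hH_meas : Measurable H) (hφ_meas : Measurable φ) (hv_meas : Measurable v) (hC : 0 ≤ C)
    (hv_sub : ∀ x a, v (x + a) ≤ v x * v a)
    (hv_smul : ∀ t ∈ Ioo (0 : ℝ) 1, ∀ η, v (t • η) ≤ C * v η) :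
    ∫⁻ ξ, ENNReal.ofReal (majorant μ H φ ξ * v ξ) ∂μ
      ≤ ENNReal.ofReal C * (∫⁻ x, ENNReal.ofReal (φ x * v x) ∂μ)
          * ∫⁻ η, ENNReal.ofReal (H η * v η) ∂μ := by
  have hw_sub (x a : V) :
      ENNReal.ofReal (v (x + a)) ≤ ENNReal.ofReal (v x) * ENNReal.ofReal (v a) := by
    rw [← ENNReal.ofReal_mul (hv x)]
    exact ENNReal.ofReal_le_ofReal (hv_sub x a)
  have hw_smul : ∀ᵐ t ∂volume.restrict (Ioo (0 : ℝ) 1), ∀ η,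
      ENNReal.ofReal (v (t • η)) ≤ ENNReal.ofReal C * ENNReal.ofReal (v η) := by
    refine ae_restrict_of_forall_mem measurableSet_Ioo fun t ht η => ?_
    rw [← ENNReal.ofReal_mul hC]
    exact ENNReal.ofReal_le_ofReal (hv_smul t ht η)
  calc ∫⁻ ξ, ENNReal.ofReal (majorant μ H φ ξ * v ξ) ∂μ
      ≤ ∫⁻ ξ, (∫⁻ t in Ioo (0 : ℝ) 1,
            ∫⁻ η, ENNReal.ofReal (H η) * ENNReal.ofReal (φ (ξ - t • η)) ∂μ)
          * ENNReal.ofReal (v ξ) ∂μ := lintegral_mono fun ξ => by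
        rw [ENNReal.ofReal_mul (majorant_nonneg hH hφ ξ)]
        gcongr
        exact ofReal_majorant_le hH hφ ξ
    _ ≤ volume.restrict (Ioo (0 : ℝ) 1) univ * ENNReal.ofReal C
          * (∫⁻ x, ENNReal.ofReal (φ x) * ENNReal.ofReal (v x) ∂μ)
          * ∫⁻ η, ENNReal.ofReal (H η) * ENNReal.ofReal (v η) ∂μ :=
        lintegral_lintegral_comp_sub_smul_mul_le (by fun_prop) (by fun_prop) (by fun_prop)
          hw_sub hw_smul
    _ = _ := by
        simp_rw [Measure.restrict_apply_univ, Real.volume_Ioo, sub_zero, ENNReal.ofReal_one,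
          one_mul, ← ENNReal.ofReal_mul (hφ _), ← ENNReal.ofReal_mul (hH _)]

theorem integrable_majorant_mul_and_integral_le {v : V → ℝ} {C : ℝ} (hH : 0 ≤ H) (hφ : 0 ≤ φ)
    (hv : 0 ≤ v) (hH_meas : Measurable H) (hφ_meas : Measurable φ) (hv_meas : Measurable v)
    (hC : 0 ≤ C) (hv_sub : ∀ x a, v (x + a) ≤ v x * v a)
    (hv_smul : ∀ t ∈ Ioo (0 : ℝ) 1, ∀ η, v (t • η) ≤ C * v η)
    (hφv : Integrable (fun x => φ x * v x) μ) (hHv : Integrable (fun η => H η * v η) μ) :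
    Integrable (fun ξ => majorant μ H φ ξ * v ξ) μ ∧
      ∫ ξ, majorant μ H φ ξ * v ξ ∂μ ≤ (C * ∫ x, φ x * v x ∂μ) * ∫ η, H η * v η ∂μ := by
  have hφv0 : 0 ≤ fun x => φ x * v x := fun x => mul_nonneg (hφ x) (hv x)
  have hHv0 : 0 ≤ fun η => H η * v η := fun η => mul_nonneg (hH η) (hv η)
  refine integrable_and_integral_le_of_lintegral_ofReal_le
    (fun ξ => mul_nonneg (majorant_nonneg hH hφ ξ) (hv ξ))
    ((stronglyMeasurable_majorant hH_meas hφ_meas).mul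
      hv_meas.stronglyMeasurable).aestronglyMeasurable
    (mul_nonneg (mul_nonneg hC (integral_nonneg hφv0)) (integral_nonneg hHv0)) ?_
  rw [ENNReal.ofReal_mul (mul_nonneg hC (integral_nonneg hφv0)), ENNReal.ofReal_mul hC,
    ofReal_integral_eq_lintegral_ofReal hφv (ae_of_all _ hφv0),
    ofReal_integral_eq_lintegral_ofReal hHv (ae_of_all _ hHv0)]
  exact lintegral_ofReal_majorant_mul_le hH hφ hv hH_meas hφ_meas hv_meas hC hv_sub hv_smul

end Majorant

/-- the majorant `ĝ(ξ) = ∫₀¹∫ (1-t) H(η) e^{-|ξ-tη|²/16} dη dt` belongs to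
`L¹_{(v)}` with `∫ ĝ v ≤ C' ∫ H v`, where `C' = C ∫ e^{-|ξ|²/16} v(ξ) dξ`. -/
theorem stmt_6 (n : ℕ) (C : ℝ) (hC : 0 < C)
    (v : E n → ℝ) (hv_meas : Measurable v) (hv_pos : ∀ ξ, 0 < v ξ)
    (hv_sub : ∀ ξ η, v (ξ + η) ≤ v ξ * v η)
    (hv_scale : ∀ t ∈ Set.Icc (0:ℝ) 1, ∀ ξ, v (t • ξ) ≤ C * v ξ)
    (hv_gauss : Integrable (fun ξ : E n => Real.exp (-‖ξ‖ ^ 2 / 16) * v ξ))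
    (H : E n → ℝ) (hH_meas : Measurable H) (hH_nonneg : ∀ η, 0 ≤ H η)
    (hH : Integrable (fun η => H η * v η)) :
    Integrable (fun ξ : E n =>
      (∫ t in Set.Ioo (0:ℝ) 1, ∫ η, (1 - t) * H η * Real.exp (-‖ξ - t • η‖ ^ 2 / 16)) * v ξ) ∧
    ∫ ξ : E n,
        (∫ t in Set.Ioo (0:ℝ) 1, ∫ η, (1 - t) * H η * Real.exp (-‖ξ - t • η‖ ^ 2 / 16)) * v ξ
      ≤ (C * ∫ ξ : E n, Real.exp (-‖ξ‖ ^ 2 / 16) * v ξ) * ∫ η, H η * v η :=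
  integrable_majorant_mul_and_integral_le (φ := fun ξ => Real.exp (-‖ξ‖ ^ 2 / 16)) (μ := volume)
    hH_nonneg (fun ξ => (Real.exp_pos _).le) (fun ξ => (hv_pos ξ).le) hH_meas (by fun_prop)
    hv_meas hC.le hv_sub (fun t ht => hv_scale t (Ioo_subset_Icc_self ht)) hv_gauss hH
end
end
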